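/- With the same setup (generic channel matrices, S_X ≻ 0 of rank s, S_{X_T} ≻ 0 of rank t), rank(S_{Ȳ_R | Ȳ_D, X}) = min(r, (t − d)⁺) almost surely, where S_{Ȳ_R|Ȳ_D,X} is the covariance of Ȳ_R conditioned on both Ȳ_D and X. -/

import Mathlib

open Matrix ComplexOrder

/-- `P` is the Moore–Penrose pseudoinverse of `D`. -/
def IsMoorePenroseInv {m n : Type*} [Fintype m] [Fintype n] (D : Matrix m n ℂ)
    (P : Matrix n m ℂ) : Prop :=
  D * P * D = D ∧ P * D * P = P ∧ (D * P)ᴴ = D * P ∧ (P * D)ᴴ = P * D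

/-!
Factor `S = L Lᴴ` with `L` invertible and put `A = H_R L`, `B = G₂ L`, so that the conditional
covariance is `A Aᴴ - A Bᴴ P B Aᴴ`. Since `(B Bᴴ) P (B Bᴴ) = B Bᴴ`, the matrix `Bᴴ P B` is the
orthogonal projection onto the row space of `B`, so with `Q = 1 - Bᴴ P B` the Schur complement
is `(A Q)(A Q)ᴴ`. The rows of `A Q` are orthogonal to those of `B` and differ from those of `A` by
combinations of rows of `B`, whence `rank (A Q) + rank B = rank [A; B]`. The genericity
assumptions give `rank [A; B]` and `rank B`, and the difference is `min r (t - d)`.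
-/

namespace Matrix

section RowSpace

variable {m₁ m₂ n R : Type*} [Fintype m₁] [Fintype m₂] [Fintype n]
  [Field R] [PartialOrder R] [StarRing R] [StarOrderedRing R]

theorem disjoint_span_row_of_mul_conjTranspose_eq_zero {C : Matrix m₁ n R}
    {B : Matrix m₂ n R} (h : C * Bᴴ = 0) :
    Disjoint (Submodule.span R (Set.range C.row)) (Submodule.span R (Set.range B.row)) := by
  rw [← range_vecMulLinear, ← range_vecMulLinear, disjoint_iff, eq_bot_iff]
  rintro _ ⟨⟨u, rfl⟩, ⟨w, hw⟩⟩
  rw [vecMulLinear_apply, vecMulLinear_apply] at hw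
  have : u ᵥ* C ⬝ᵥ star (u ᵥ* C) = 0 := by
    nth_rw 2 [← hw]
    rw [star_vecMul, dotProduct_mulVec, vecMul_vecMul, h, vecMul_zero, zero_dotProduct]
  exact (Submodule.mem_bot R).mpr (dotProduct_self_star_eq_zero.mp this)

theorem rank_fromRows_of_mul_conjTranspose_eq_zero {C : Matrix m₁ n R}
    {B : Matrix m₂ n R} (h : C * Bᴴ = 0) :
    (fromRows C B).rank = C.rank + B.rank := by
  have hrows : Set.range (fromRows C B).row = Set.range C.row ∪ Set.range B.row :=
    Set.Sum.elim_range _ _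
  rw [rank_eq_finrank_span_row, rank_eq_finrank_span_row, rank_eq_finrank_span_row,
    hrows, Submodule.span_union, ← Submodule.finrank_sup_add_finrank_inf_eq,
    (disjoint_span_row_of_mul_conjTranspose_eq_zero h).eq_bot, finrank_bot, add_zero]

end RowSpace

def IsGeneralizedInverse {m n R : Type*} [Fintype m] [Fintype n] [Mul R] [AddCommMonoid R]
    (D : Matrix m n R) (P : Matrix n m R) : Prop :=
  D * P * D = D

namespace IsGeneralizedInverse

variable {m n p R : Type*} [Fintype m] [Fintype n] [DecidableEq m]
  [Field R] [PartialOrder R] [StarRing R] [StarOrderedRing R]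
  {B : Matrix m n R} {P : Matrix m m R}

theorem mul_conjTranspose_mul_mul (hP : IsGeneralizedInverse (B * Bᴴ) P) :
    B * (Bᴴ * P * B) = B := by
  have h : (B * Bᴴ * P - 1) * (B * Bᴴ) = 0 := by rw [Matrix.sub_mul, hP, Matrix.one_mul, sub_self]
  rw [mul_self_mul_conjTranspose_eq_zero, Matrix.sub_mul, Matrix.one_mul, sub_eq_zero] at h
  simpa only [Matrix.mul_assoc] using h

theorem conjTranspose_mul_mul_mul_conjTranspose (hP : IsGeneralizedInverse (B * Bᴴ) P) :
    Bᴴ * P * B * Bᴴ = Bᴴ := by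
  have h : B * Bᴴ * (P * (B * Bᴴ) - 1) = 0 := by
    rw [Matrix.mul_sub, ← Matrix.mul_assoc, hP, Matrix.mul_one, sub_self]
  rw [self_mul_conjTranspose_mul_eq_zero, Matrix.mul_sub, Matrix.mul_one, sub_eq_zero] at h
  simpa only [Matrix.mul_assoc] using h

theorem isHermitian_conjTranspose_mul_mul (hP : IsGeneralizedInverse (B * Bᴴ) P) :
    (Bᴴ * P * B).IsHermitian := by
  have h : Bᴴ * P * B * (Bᴴ * P * B)ᴴ = (Bᴴ * P * B)ᴴ :=
    calc Bᴴ * P * B * (Bᴴ * P * B)ᴴ = Bᴴ * P * B * Bᴴ * Pᴴ * B := by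
          simp only [conjTranspose_mul, conjTranspose_conjTranspose, Matrix.mul_assoc]
      _ = (Bᴴ * P * B)ᴴ := by
          rw [hP.conjTranspose_mul_mul_mul_conjTranspose]
          simp only [conjTranspose_mul, conjTranspose_conjTranspose, Matrix.mul_assoc]
  have hH := isHermitian_mul_conjTranspose_self (Bᴴ * P * B)
  rw [h] at hH
  exact isHermitian_conjTranspose_iff.mp hH

theorem isIdempotentElem_conjTranspose_mul_mul (hP : IsGeneralizedInverse (B * Bᴴ) P) :
    IsIdempotentElem (Bᴴ * P * B) := by
  calc Bᴴ * P * B * (Bᴴ * P * B) = Bᴴ * P * (B * (Bᴴ * P * B)) := by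
        simp only [Matrix.mul_assoc]
    _ = Bᴴ * P * B := by rw [hP.mul_conjTranspose_mul_mul]

variable [DecidableEq n]

theorem mul_conjTranspose_sub_eq (A : Matrix p n R) (hP : IsGeneralizedInverse (B * Bᴴ) P) :
    A * Aᴴ - A * Bᴴ * P * (A * Bᴴ)ᴴ
      = A * (1 - Bᴴ * P * B) * (A * (1 - Bᴴ * P * B))ᴴ := by
  have hQ : (1 - Bᴴ * P * B)ᴴ = 1 - Bᴴ * P * B := by
    rw [conjTranspose_sub, conjTranspose_one, hP.isHermitian_conjTranspose_mul_mul.eq]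
  have hQQ := hP.isIdempotentElem_conjTranspose_mul_mul.one_sub.eq
  calc A * Aᴴ - A * Bᴴ * P * (A * Bᴴ)ᴴ = A * (1 - Bᴴ * P * B) * Aᴴ := by
        simp only [conjTranspose_mul, conjTranspose_conjTranspose, Matrix.mul_sub,
          Matrix.sub_mul, Matrix.mul_one, Matrix.mul_assoc]
    _ = A * (1 - Bᴴ * P * B) * (A * (1 - Bᴴ * P * B))ᴴ := by
        rw [conjTranspose_mul, hQ, ← Matrix.mul_assoc, Matrix.mul_assoc A _ (1 - Bᴴ * P * B),
          hQQ]

variable [Fintype p] [DecidableEq p]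

theorem rank_fromRows (A : Matrix p n R) (hP : IsGeneralizedInverse (B * Bᴴ) P) :
    (fromRows A B).rank = (A * (1 - Bᴴ * P * B)).rank + B.rank := by
  have horth : A * (1 - Bᴴ * P * B) * Bᴴ = 0 := by
    rw [Matrix.mul_assoc, Matrix.sub_mul, Matrix.one_mul,
      hP.conjTranspose_mul_mul_mul_conjTranspose, sub_self, Matrix.mul_zero]
  have hrows : (fromBlocks 1 (A * Bᴴ * P) 0 1 : Matrix (p ⊕ m) (p ⊕ m) R)
      * fromRows (A * (1 - Bᴴ * P * B)) B = fromRows A B := by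
    simp only [fromBlocks_mul_fromRows, Matrix.one_mul, Matrix.zero_mul, zero_add,
      Matrix.mul_sub, Matrix.mul_one, Matrix.mul_assoc, sub_add_cancel, sub_self]
  have hunit : IsUnit (fromBlocks 1 (A * Bᴴ * P) 0 1 : Matrix (p ⊕ m) (p ⊕ m) R).det := by
    simp
  rw [← hrows, rank_mul_eq_right_of_isUnit_det _ _ hunit,
    rank_fromRows_of_mul_conjTranspose_eq_zero horth]

theorem rank_mul_conjTranspose_sub_add_rank (A : Matrix p n R)
    (hP : IsGeneralizedInverse (B * Bᴴ) P) :
    (A * Aᴴ - A * Bᴴ * P * (A * Bᴴ)ᴴ).rank + B.rank = (fromRows A B).rank := by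
  rw [hP.mul_conjTranspose_sub_eq, rank_self_mul_conjTranspose, hP.rank_fromRows]

end IsGeneralizedInverse

theorem PosDef.fromBlocks_zero {m n R : Type*} [Fintype m] [Fintype n] [CommRing R]
    [PartialOrder R] [StarRing R] [StarOrderedRing R] {A : Matrix m m R} {D : Matrix n n R}
    (hA : A.PosDef) (hD : D.PosDef) : (fromBlocks A 0 0 D).PosDef := by
  refine posDef_iff_dotProduct_mulVec.mpr
    ⟨hA.isHermitian.fromBlocks (by simp) hD.isHermitian, fun x hx => ?_⟩
  obtain ⟨u, v, rfl⟩ : ∃ u v, x = Sum.elim u v := ⟨_, _, (Sum.elim_comp_inl_inr x).symm⟩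
  simp only [fromBlocks_mulVec, zero_mulVec, add_zero, zero_add, Sum.elim_comp_inl,
    Sum.elim_comp_inr, Function.star_sumElim, sumElim_dotProduct_sumElim]
  by_cases hu : u = 0
  · have hv : v ≠ 0 := fun hv => hx (by simp [hu, hv])
    exact add_pos_of_nonneg_of_pos (hA.posSemidef.dotProduct_mulVec_nonneg u)
      (hD.dotProduct_mulVec_pos hv)
  · exact add_pos_of_pos_of_nonneg (hA.dotProduct_mulVec_pos hu)
      (hD.posSemidef.dotProduct_mulVec_nonneg v)

open scoped MatrixOrder in
theorem rank_sub_add_rank_of_posDef {m n p 𝕜 : Type*} [Fintype m] [Fintype n] [Fintype p]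
    [DecidableEq m] [DecidableEq n] [DecidableEq p] [RCLike 𝕜] {S : Matrix n n 𝕜} (hS : S.PosDef)
    (H : Matrix p n 𝕜) (G : Matrix m n 𝕜) {P : Matrix m m 𝕜}
    (hP : IsGeneralizedInverse (G * S * Gᴴ) P) :
    (H * S * Hᴴ - H * S * Gᴴ * P * (H * S * Gᴴ)ᴴ).rank + G.rank = (fromRows H G).rank := by
  obtain ⟨L, hL, rfl⟩ := CStarAlgebra.isStrictlyPositive_iff_eq_mul_star_self.mp
    hS.isStrictlyPositive
  have hdet : IsUnit L.det := (isUnit_iff_isUnit_det L).mp hL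
  have hP' : IsGeneralizedInverse (G * L * (G * L)ᴴ) P := by
    simpa only [star_eq_conjTranspose, conjTranspose_mul, Matrix.mul_assoc] using hP
  have key := hP'.rank_mul_conjTranspose_sub_add_rank (H * L)
  rw [← fromRows_mul, rank_mul_eq_left_of_isUnit_det _ _ hdet,
    rank_mul_eq_left_of_isUnit_det _ _ hdet] at key
  simpa only [star_eq_conjTranspose, conjTranspose_mul, Matrix.mul_assoc] using key

end Matrix

theorem rank_conditional_covariance_relay_given_dest_and_input_general
    (r d s t : ℕ)
    (SX : Matrix (Fin s) (Fin s) ℂ) (SXT : Matrix (Fin t) (Fin t) ℂ)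
    (hSX : SX.PosDef) (hSXT : SXT.PosDef)
    (HR : Matrix (Fin r) (Fin s ⊕ Fin t) ℂ)
    -- the map giving the conditioned-on block `(Ȳ_D, X)`
    (G2 : Matrix (Fin d ⊕ Fin s) (Fin s ⊕ Fin t) ℂ)
    -- genericity: full rank of the stacked maps
    (hgen1 : (Matrix.of (Sum.elim (fun i => HR i) (fun i => G2 i)) :
        Matrix (Fin r ⊕ (Fin d ⊕ Fin s)) (Fin s ⊕ Fin t) ℂ).rank
        = min (r + d + s) (s + t))
    (hgen2 : G2.rank = min (d + s) (s + t))
    (S : Matrix (Fin s ⊕ Fin t) (Fin s ⊕ Fin t) ℂ)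
    (hS : S = Matrix.fromBlocks SX 0 0 SXT)
    (P : Matrix (Fin d ⊕ Fin s) (Fin d ⊕ Fin s) ℂ)
    (hP : IsMoorePenroseInv (G2 * S * G2ᴴ) P) :
    (HR * S * HRᴴ - (HR * S * G2ᴴ) * P * (HR * S * G2ᴴ)ᴴ).rank
      = min r (t - d) := by
  have key := rank_sub_add_rank_of_posDef (hS ▸ hSX.fromBlocks_zero hSXT) HR G2 hP.1
  have hstacked : (fromRows HR G2).rank = min (r + d + s) (s + t) := hgen1
  omega

/-- For noiseless observations `Ȳ_R = H_SR X + H_TR X_T`,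
`Ȳ_D = H_SD X + H_TD X_T` with independent Gaussian `X, X_T` of positive
definite covariances and generic channel matrices, the conditional covariance
of `Ȳ_R` given `(Ȳ_D, X)` has rank `min r ((t − d)⁺)` (truncated
subtraction). -/
theorem rank_conditional_covariance_relay_given_dest_and_input
    (r d s t : ℕ)
    (HSR : Matrix (Fin r) (Fin s) ℂ) (HTR : Matrix (Fin r) (Fin t) ℂ)
    (HSD : Matrix (Fin d) (Fin s) ℂ) (HTD : Matrix (Fin d) (Fin t) ℂ)
    (SX : Matrix (Fin s) (Fin s) ℂ) (SXT : Matrix (Fin t) (Fin t) ℂ)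
    (hSX : SX.PosDef) (hSXT : SXT.PosDef)
    (HR : Matrix (Fin r) (Fin s ⊕ Fin t) ℂ)
    (hHR : HR = Matrix.of fun i => Sum.elim (HSR i) (HTR i))
    (HD : Matrix (Fin d) (Fin s ⊕ Fin t) ℂ)
    (hHD : HD = Matrix.of fun i => Sum.elim (HSD i) (HTD i))
    -- the map extracting `X` from `(X, X_T)`
    (EX : Matrix (Fin s) (Fin s ⊕ Fin t) ℂ)
    (hEX : EX = Matrix.of fun i j =>
      Sum.elim (fun j' => if i = j' then (1:ℂ) else 0) (fun _ => (0:ℂ)) j)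
    -- the map giving the conditioned-on block `(Ȳ_D, X)`
    (G2 : Matrix (Fin d ⊕ Fin s) (Fin s ⊕ Fin t) ℂ)
    (hG2 : G2 = Matrix.of (Sum.elim (fun i => HD i) (fun i => EX i)))
    -- genericity: full rank of the stacked maps
    (hgen1 : (Matrix.of (Sum.elim (fun i => HR i) (fun i => G2 i)) :
        Matrix (Fin r ⊕ (Fin d ⊕ Fin s)) (Fin s ⊕ Fin t) ℂ).rank
        = min (r + d + s) (s + t))
    (hgen2 : G2.rank = min (d + s) (s + t))
    (S : Matrix (Fin s ⊕ Fin t) (Fin s ⊕ Fin t) ℂ)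
    (hS : S = Matrix.fromBlocks SX 0 0 SXT)
    (P : Matrix (Fin d ⊕ Fin s) (Fin d ⊕ Fin s) ℂ)
    (hP : IsMoorePenroseInv (G2 * S * G2ᴴ) P) :
    (HR * S * HRᴴ - (HR * S * G2ᴴ) * P * (HR * S * G2ᴴ)ᴴ).rank
      = min r (t - d) :=
  rank_conditional_covariance_relay_given_dest_and_input_general r d s t SX SXT hSX hSXT HR G2 hgen1
    hgen2 S hS P hP
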